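/- arXiv:1701.05272 — 2 statements merged into one kernel-verified Lean document; each statement's English description precedes it below -/
import Mathlib

section
/- Let V, W, Z be finite-dimensional real inner product spaces, h : V → W and g : W → Z linear maps, and E ⊆ V a subspace. Then sup over unit vectors v ∈ E^⊥ of ‖P_{(g h E)^⊥}(g h v)‖ is at most ( sup over unit u ∈ (hE)^⊥ of ‖P_{(g h E)^⊥}(g u)‖ ) · ( sup over unit v ∈ E^⊥ of ‖P_{(hE)^⊥}(h v)‖ ). -/
/-!
Writing `F = h E`, the component of `h v` along `F` is mapped by `g` into `g F`, which the
projection onto `(g F)ᗮ` kills. Hence `P_{(gF)ᗮ} (g (h v)) = P_{(gF)ᗮ} (g u)` with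
`u = P_{Fᗮ} (h v) ∈ Fᗮ`, so the left-hand side is the norm on `Eᗮ` of a composite of two operators,
and operator norms restricted to subspaces are submultiplicative.
-/

namespace ContinuousLinearMap

variable {X Y Z : Type*} [NormedAddCommGroup X] [NormedSpace ℝ X]
  [NormedAddCommGroup Y] [NormedSpace ℝ Y] [NormedAddCommGroup Z] [NormedSpace ℝ Z]

/-- The norm of `T` restricted to the subspace `S`; `0` when `S = ⊥`. -/
noncomputable def normOn (T : X →L[ℝ] Y) (S : Submodule ℝ X) : ℝ :=
  sSup {r : ℝ | ∃ v ∈ S, ‖v‖ = 1 ∧ r = ‖T v‖}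

theorem normOn_nonneg (T : X →L[ℝ] Y) (S : Submodule ℝ X) : 0 ≤ T.normOn S :=
  Real.sSup_nonneg <| by rintro r ⟨v, -, -, rfl⟩; positivity

theorem norm_apply_le_normOn {T : X →L[ℝ] Y} {S : Submodule ℝ X} {v : X} (hv : v ∈ S)
    (hv1 : ‖v‖ = 1) : ‖T v‖ ≤ T.normOn S := by
  refine le_csSup ⟨‖T‖, ?_⟩ ⟨v, hv, hv1, rfl⟩
  rintro r ⟨w, -, hw1, rfl⟩
  simpa [hw1] using T.le_opNorm w

theorem normOn_le {T : X →L[ℝ] Y} {S : Submodule ℝ X} {c : ℝ} (hc : 0 ≤ c)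
    (h : ∀ v ∈ S, ‖v‖ = 1 → ‖T v‖ ≤ c) : T.normOn S ≤ c :=
  Real.sSup_le (by rintro r ⟨v, hv, hv1, rfl⟩; exact h v hv hv1) hc

theorem norm_apply_le_normOn_mul_norm {T : X →L[ℝ] Y} {S : Submodule ℝ X} {x : X}
    (hx : x ∈ S) : ‖T x‖ ≤ T.normOn S * ‖x‖ := by
  rcases eq_or_ne x 0 with rfl | hx0
  · simp
  have hnorm : ‖x‖ ≠ 0 := norm_ne_zero_iff.mpr hx0
  have hunit := norm_apply_le_normOn (T := T) (S.smul_mem ‖x‖⁻¹ hx)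
    (by rw [norm_smul, norm_inv, norm_norm, inv_mul_cancel₀ hnorm])
  rw [map_smul, norm_smul, norm_inv, norm_norm] at hunit
  rwa [inv_mul_le_iff₀ (norm_pos_iff.mpr hx0), mul_comm] at hunit

theorem normOn_comp_le (T₁ : Y →L[ℝ] Z) (T₂ : X →L[ℝ] Y) {S : Submodule ℝ X}
    {S' : Submodule ℝ Y} (hmaps : ∀ x ∈ S, T₂ x ∈ S') :
    (T₁ ∘L T₂).normOn S ≤ T₁.normOn S' * T₂.normOn S :=
  normOn_le (mul_nonneg (T₁.normOn_nonneg S') (T₂.normOn_nonneg S)) fun v hv hv1 =>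
    calc ‖T₁ (T₂ v)‖ ≤ T₁.normOn S' * ‖T₂ v‖ := norm_apply_le_normOn_mul_norm (hmaps v hv)
      _ ≤ T₁.normOn S' * T₂.normOn S :=
        mul_le_mul_of_nonneg_left (norm_apply_le_normOn hv hv1) (T₁.normOn_nonneg S')

end ContinuousLinearMap

namespace Submodule

variable {𝕜 W Z : Type*} [RCLike 𝕜] [NormedAddCommGroup W] [InnerProductSpace 𝕜 W]
  [NormedAddCommGroup Z] [InnerProductSpace 𝕜 Z]

theorem starProjection_orthogonal_map_apply_starProjection_orthogonal (F : Submodule 𝕜 W)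
    (g : W →ₗ[𝕜] Z) [F.HasOrthogonalProjection] [(F.map g)ᗮ.HasOrthogonalProjection]
    (w : W) :
    (F.map g)ᗮ.starProjection (g (Fᗮ.starProjection w)) = (F.map g)ᗮ.starProjection (g w) := by
  have hF : w - Fᗮ.starProjection w ∈ F := by simp
  have := (F.map g)ᗮ.starProjection_apply_eq_zero_iff.mpr
    ((F.map g).le_orthogonal_orthogonal (mem_map_of_mem hF))
  rwa [map_sub, map_sub, sub_eq_zero, eq_comm] at this

end Submodule

/-- Submultiplicativity of the transverse expansion quantity:
`sup_{v ∈ Eᗮ, ‖v‖=1} ‖P_{(ghE)ᗮ}(ghv)‖ ≤ (sup_{u ∈ (hE)ᗮ, ‖u‖=1} ‖P_{(ghE)ᗮ}(gu)‖) ·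
(sup_{v ∈ Eᗮ, ‖v‖=1} ‖P_{(hE)ᗮ}(hv)‖)`. -/
theorem stmt6 {V W Z : Type*} [NormedAddCommGroup V] [InnerProductSpace ℝ V]
    [NormedAddCommGroup W] [InnerProductSpace ℝ W]
    [NormedAddCommGroup Z] [InnerProductSpace ℝ Z]
    [FiniteDimensional ℝ V] [FiniteDimensional ℝ W] [FiniteDimensional ℝ Z]
    (h : V →ₗ[ℝ] W) (g : W →ₗ[ℝ] Z) (E : Submodule ℝ V) :
    sSup {r : ℝ | ∃ v ∈ Eᗮ, ‖v‖ = 1 ∧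
        r = ‖(Submodule.orthogonalProjectionOnto ((E.map h).map g)ᗮ (g (h v)) : Z)‖} ≤
      sSup {r : ℝ | ∃ u ∈ (E.map h)ᗮ, ‖u‖ = 1 ∧
          r = ‖(Submodule.orthogonalProjectionOnto ((E.map h).map g)ᗮ (g u) : Z)‖} *
      sSup {r : ℝ | ∃ v ∈ Eᗮ, ‖v‖ = 1 ∧
          r = ‖(Submodule.orthogonalProjectionOnto (E.map h)ᗮ (h v) : W)‖} := by
  set F := E.map h
  let Pg := (F.map g)ᗮ.starProjection ∘L LinearMap.toContinuousLinearMap g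
  let Ph := Fᗮ.starProjection ∘L LinearMap.toContinuousLinearMap h
  have hcomp :
      Pg ∘L Ph = (F.map g)ᗮ.starProjection ∘L LinearMap.toContinuousLinearMap (g ∘ₗ h) := by
    ext v
    exact F.starProjection_orthogonal_map_apply_starProjection_orthogonal g (h v)
  -- the coerced `orthogonalProjectionOnto` is `starProjection` by definition
  change ((F.map g)ᗮ.starProjection ∘L LinearMap.toContinuousLinearMap (g ∘ₗ h)).normOn Eᗮ ≤
    Pg.normOn Fᗮ * Ph.normOn Eᗮ
  rw [← hcomp]
  exact Pg.normOn_comp_le Ph fun v _ => Fᗮ.starProjection_apply_mem (h v)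
end

section
/- Let F : D → R^N be a C¹ map on an open set D ⊆ R^K (K ≥ N) such that for every B ∈ D there is an N-dimensional subspace P' ⊆ R^K with |det(DF(B)|_{P'})| > κ₀ > 0 (with respect to orthonormal bases), and suppose ‖DF‖ ≤ A on D. Let S ⊆ R^N be measurable with Lebesgue measure |S|. Then the Lebesgue measure of F^{-1}(S) ∩ D₀ for any compact D₀ ⊂ D satisfies |F^{-1}(S) ∩ D₀| ≤ C(κ₀, A, N, K, D₀) · |S|, i.e., preimages of small-measure sets under uniform submersions have small measure. -/
/-!
Since `det(B B*) > κ₀² ≥ 0` for `B = DF(x)|_{P'}`, `DF(x)` is surjective at every point of `D`.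
Near a point `x₀`, take a continuous right inverse `σ` of `L = DF(x₀)` and set
`G y = σ (F y) + y - σ (L y)`: then `L ∘ G = F` and `DG(x₀) = id`, so near `x₀` the map `G` is
injective with Jacobian bounded away from `0`, and it carries `F⁻¹(S) ∩ U` into a bounded part
of `L⁻¹(S)`. The measure of a bounded part of `L⁻¹(S)` is at most a constant times `|S|`, because
`S ↦ μ(L⁻¹(S) ∩ slab)` is a translation-invariant, locally finite measure, hence a multiple of
Lebesgue measure. Compactness of `D₀` glues finitely many such local bounds.
-/

open MeasureTheory Measure Set Filter Topology Bornology Function Metric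
open scoped NNReal ENNReal Pointwise

theorem LinearMap.surjective_of_det_comp_ne_zero {K M N : Type*} [Field K]
    [AddCommGroup M] [Module K M] [AddCommGroup N] [Module K N] [FiniteDimensional K N]
    {f : M →ₗ[K] N} {g : N →ₗ[K] M} (h : LinearMap.det (f ∘ₗ g) ≠ 0) : Surjective f :=
  Surjective.of_comp (LinearMap.equivOfDetNeZero _ h).surjective

theorem ContinuousOn.measurableSet_preimage_inter {α β : Type*} [TopologicalSpace α]
    [MeasurableSpace α] [OpensMeasurableSpace α] [TopologicalSpace β] [MeasurableSpace β]
    [BorelSpace β] {f : α → β} {U : Set α} (hf : ContinuousOn f U) (hU : IsOpen U)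
    {S : Set β} (hS : MeasurableSet S) : MeasurableSet (f ⁻¹' S ∩ U) := by
  have := hU.measurableSet.subtype_image (hf.domRestrict.measurable hS)
  rwa [domRestrict_eq, preimage_comp, Subtype.image_preimage_coe, inter_comm] at this

section AddHaar

variable {E E' : Type*}
  [NormedAddCommGroup E] [NormedSpace ℝ E] [FiniteDimensional ℝ E]
  [MeasurableSpace E] [BorelSpace E]
  [NormedAddCommGroup E'] [NormedSpace ℝ E'] [FiniteDimensional ℝ E']
  [MeasurableSpace E'] [BorelSpace E']

theorem exists_addHaar_preimage_inter_le_of_surjective {π : E →L[ℝ] E'} (hπ : Surjective π)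
    (μ : Measure E) [IsAddHaarMeasure μ] (ν : Measure E') [IsAddHaarMeasure ν]
    {B : Set E} (hB : IsBounded B) :
    ∃ c : ℝ≥0, ∀ S, MeasurableSet S → μ (π ⁻¹' S ∩ B) ≤ c * ν S := by
  obtain ⟨σ, hσ⟩ := π.exists_rightInverse_of_surjective (LinearMap.range_eq_top.2 hπ)
  set q : E →L[ℝ] E := .id ℝ E - σ ∘L π
  have hqσ : ∀ a, q (σ a) = 0 := fun a => by
    simp [q, ← ContinuousLinearMap.comp_apply π σ, hσ]
  obtain ⟨R, hR⟩ := (q.lipschitz.isBounded_image hB).subset_closedBall 0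
  set C := q ⁻¹' closedBall 0 R
  set ρ := (μ.restrict C).map π
  have hρ : ∀ S, MeasurableSet S → ρ S = μ (π ⁻¹' S ∩ C) := fun S hS => by
    rw [map_apply π.measurable hS, restrict_apply (π.measurable hS)]
  -- the slab `C` is invariant under translation by `σ a`, which moves the fibres of `π` by `a`
  have : IsAddLeftInvariant ρ := ⟨fun a => ext fun S hS => by
    rw [map_apply (measurable_const_add a) hS, hρ _ (measurable_const_add a hS), hρ S hS,
      ← measure_preimage_add μ (σ a) (π ⁻¹' S ∩ C)]
    congr 1
    ext z
    simp [C, hqσ, ← ContinuousLinearMap.comp_apply π σ, hσ]⟩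
  have : IsFiniteMeasureOnCompacts ρ := ⟨fun K hK => by
    rw [hρ K hK.isClosed.measurableSet]
    refine IsBounded.measure_lt_top ((hK.image σ.continuous).isBounded.add
      isBounded_closedBall |>.subset fun z hz => ⟨σ (π z), mem_image_of_mem σ hz.1, q z, hz.2, ?_⟩)
    simp [q]⟩
  refine ⟨addHaarScalarFactor ρ ν, fun S hS => ?_⟩
  calc μ (π ⁻¹' S ∩ B) ≤ μ (π ⁻¹' S ∩ C) :=
        measure_mono (inter_subset_inter_right _ fun z hz => hR (mem_image_of_mem q hz))
    _ = ρ S := (hρ S hS).symm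
    _ = addHaarScalarFactor ρ ν * ν S := by
        conv_lhs => rw [isAddLeftInvariant_eq_smul ρ ν]
        rfl

theorem mul_addHaar_le_addHaar_image_of_le_abs_det (μ : Measure E) [IsAddHaarMeasure μ]
    {G : E → E} {G' : E → E →L[ℝ] E} {s : Set E} (hs : MeasurableSet s)
    (hG : ∀ x ∈ s, HasFDerivWithinAt G (G' x) s x) (hinj : InjOn G s) {ε : ℝ≥0}
    (hε : ∀ x ∈ s, (ε : ℝ) ≤ |(G' x).det|) : ε * μ s ≤ μ (G '' s) :=
  calc ε * μ s = ∫⁻ _ in s, (ε : ℝ≥0∞) ∂μ := (setLIntegral_const s _).symm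
    _ ≤ ∫⁻ x in s, ENNReal.ofReal |(G' x).det| ∂μ := setLIntegral_mono' hs fun x hx => by
        simpa using ENNReal.ofReal_le_ofReal (hε x hx)
    _ ≤ μ (G '' s) := lintegral_abs_det_fderiv_le_addHaar_image μ hs hG hinj

theorem exists_isOpen_addHaar_le_mul_addHaar_image (μ : Measure E) [IsAddHaarMeasure μ]
    {G : E → E} {V : Set E} (hV : IsOpen V) (hG : ContDiffOn ℝ 1 G V) {x₀ : E} (hx₀ : x₀ ∈ V)
    (hdet : (fderiv ℝ G x₀).det ≠ 0) :
    ∃ U ⊆ V, IsOpen U ∧ x₀ ∈ U ∧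
      ∃ c : ℝ≥0, ∀ s ⊆ U, MeasurableSet s → μ s ≤ c * μ (G '' s) := by
  have hGstrict := (hG.contDiffAt (hV.mem_nhds hx₀)).hasStrictFDerivAt one_ne_zero
  rw [← ContinuousLinearMap.coe_toContinuousLinearEquivOfDetNeZero _ hdet] at hGstrict
  set φ := hGstrict.toOpenPartialHomeomorph G
  set ε : ℝ≥0 := ⟨|(fderiv ℝ G x₀).det| / 2, by positivity⟩
  have hε : ε ≠ 0 := (NNReal.coe_pos.1 (show (0 : ℝ) < ε from half_pos (abs_pos.2 hdet))).ne'
  have hev : ∀ᶠ y in 𝓝 x₀, y ∈ V ∧ y ∈ φ.source ∧ (ε : ℝ) < |(fderiv ℝ G y).det| := by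
    filter_upwards [hV.mem_nhds hx₀,
      φ.open_source.mem_nhds hGstrict.mem_toOpenPartialHomeomorph_source,
      (((continuous_abs.comp ContinuousLinearMap.continuous_det).comp_continuousOn
        (hG.continuousOn_fderiv_of_isOpen hV le_rfl)).continuousAt
          (hV.mem_nhds hx₀)).eventually_const_lt (half_lt_self (abs_pos.2 hdet))]
      with y h₁ h₂ h₃ using ⟨h₁, h₂, h₃⟩
  obtain ⟨U, hUsub, hU, hx₀U⟩ := _root_.mem_nhds_iff.mp hev
  refine ⟨U, fun y hy => (hUsub hy).1, hU, hx₀U, ε⁻¹, fun s hsU hs => ?_⟩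
  have hvol : ε * μ s ≤ μ (G '' s) :=
    mul_addHaar_le_addHaar_image_of_le_abs_det μ hs
      (fun y hy => ((hG.contDiffAt (hV.mem_nhds (hUsub (hsU hy)).1)).differentiableAt_one
        |>.hasFDerivAt.hasFDerivWithinAt))
      (φ.injOn.mono fun y hy => (hUsub (hsU hy)).2.1)
      (fun y hy => (hUsub (hsU hy)).2.2.le)
  calc μ s = ε⁻¹ * (ε * μ s) := by
        rw [ENNReal.coe_inv hε, ENNReal.inv_mul_cancel_left (by simpa using hε) ENNReal.coe_ne_top]
    _ ≤ ε⁻¹ * μ (G '' s) := by gcongr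

theorem exists_nhds_addHaar_preimage_inter_le (μ : Measure E) [IsAddHaarMeasure μ]
    (ν : Measure E') [IsAddHaarMeasure ν] {F : E → E'} {V : Set E} (hV : IsOpen V)
    (hF : ContDiffOn ℝ 1 F V) {x₀ : E} (hx₀ : x₀ ∈ V) (hsurj : Surjective (fderiv ℝ F x₀)) :
    ∃ U ∈ 𝓝 x₀, ∃ c : ℝ≥0, ∀ S, MeasurableSet S → μ (F ⁻¹' S ∩ U) ≤ c * ν S := by
  set L := fderiv ℝ F x₀
  obtain ⟨σ, hσ⟩ := L.exists_rightInverse_of_surjective (LinearMap.range_eq_top.2 hsurj)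
  set G : E → E := fun y => σ (F y) + (y - σ (L y))
  have hLG : ∀ y, L (G y) = F y := fun y => by
    simp [G, ← ContinuousLinearMap.comp_apply L σ, hσ]
  have hG : ContDiffOn ℝ 1 G V :=
    (σ.contDiff.comp_contDiffOn hF).add (contDiffOn_id.sub (σ ∘L L).contDiff.contDiffOn)
  have hDG : fderiv ℝ G x₀ = .id ℝ E := by
    refine ((σ.hasFDerivAt.comp x₀ ((hF.contDiffAt (hV.mem_nhds hx₀)).differentiableAt_one
      |>.hasFDerivAt)).add ((hasFDerivAt_id x₀).sub (σ ∘L L).hasFDerivAt)).fderiv.trans ?_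
    simp [L]
  obtain ⟨U₁, hU₁V, hU₁, hx₀U₁, c₁, hc₁⟩ :=
    exists_isOpen_addHaar_le_mul_addHaar_image μ hV hG hx₀ (by simp [hDG, ContinuousLinearMap.det])
  set U := U₁ ∩ G ⁻¹' ball (G x₀) 1
  have hU : IsOpen U := (hG.continuousOn.mono hU₁V).isOpen_inter_preimage hU₁ isOpen_ball
  obtain ⟨c₂, hc₂⟩ := exists_addHaar_preimage_inter_le_of_surjective hsurj μ ν
    (isBounded_ball (x := G x₀) (r := 1))
  refine ⟨U, hU.mem_nhds ⟨hx₀U₁, mem_ball_self one_pos⟩, c₁ * c₂, fun S hS => ?_⟩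
  have hs : MeasurableSet (F ⁻¹' S ∩ U) :=
    (hF.continuousOn.mono fun y hy => hU₁V hy.1).measurableSet_preimage_inter hU hS
  have himage : G '' (F ⁻¹' S ∩ U) ⊆ L ⁻¹' S ∩ ball (G x₀) 1 := by
    rintro _ ⟨y, hy, rfl⟩
    exact ⟨by simpa [hLG] using hy.1, hy.2.2⟩
  calc μ (F ⁻¹' S ∩ U) ≤ c₁ * μ (G '' (F ⁻¹' S ∩ U)) :=
        hc₁ _ (inter_subset_right.trans inter_subset_left) hs
    _ ≤ c₁ * μ (L ⁻¹' S ∩ ball (G x₀) 1) := by gcongr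
    _ ≤ c₁ * (c₂ * ν S) := by gcongr; exact hc₂ S hS
    _ = ↑(c₁ * c₂) * ν S := by push_cast; ring

end AddHaar

theorem IsCompact.exists_measure_preimage_inter_le {X Y : Type*} [TopologicalSpace X]
    [MeasurableSpace X] [MeasurableSpace Y] {μ : Measure X} {ν : Measure Y} {F : X → Y}
    {K : Set X} (hK : IsCompact K)
    (hloc : ∀ x ∈ K, ∃ U ∈ 𝓝 x, ∃ c : ℝ≥0, ∀ S, MeasurableSet S → μ (F ⁻¹' S ∩ U) ≤ c * ν S) :
    ∃ c : ℝ≥0, ∀ S, MeasurableSet S → μ (F ⁻¹' S ∩ K) ≤ c * ν S := by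
  refine hK.induction_on ⟨0, by simp⟩ (fun s t hst ⟨c, hc⟩ => ⟨c, fun S hS => ?_⟩)
    (fun s t ⟨c, hc⟩ ⟨d, hd⟩ => ⟨c + d, fun S hS => ?_⟩)
    (fun x hx => ?_)
  · exact (measure_mono (inter_subset_inter_right _ hst)).trans (hc S hS)
  · calc μ (F ⁻¹' S ∩ (s ∪ t)) ≤ μ (F ⁻¹' S ∩ s) + μ (F ⁻¹' S ∩ t) := by
          rw [inter_union_distrib_left]; exact measure_union_le _ _
      _ ≤ c * ν S + d * ν S := add_le_add (hc S hS) (hd S hS)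
      _ = ↑(c + d) * ν S := by push_cast; ring
  · obtain ⟨U, hU, hc⟩ := hloc x hx
    exact ⟨U, mem_nhdsWithin_of_mem_nhds hU, hc⟩

theorem stmt16_general (K N : ℕ)
    (D : Set (EuclideanSpace ℝ (Fin K))) (hD : IsOpen D)
    (F : EuclideanSpace ℝ (Fin K) → EuclideanSpace ℝ (Fin N))
    (hF : ContDiffOn ℝ 1 F D)
    (κ₀ : ℝ)
    (hsub : ∀ B ∈ D, ∃ P' : Submodule ℝ (EuclideanSpace ℝ (Fin K)),
      Module.finrank ℝ P' = N ∧
      κ₀ ^ 2 < LinearMap.det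
        ((((fderiv ℝ F B).comp P'.subtypeL).comp
          (ContinuousLinearMap.adjoint ((fderiv ℝ F B).comp P'.subtypeL))) :
            EuclideanSpace ℝ (Fin N) →ₗ[ℝ] EuclideanSpace ℝ (Fin N))) :
    ∀ D₀ : Set (EuclideanSpace ℝ (Fin K)), IsCompact D₀ → D₀ ⊆ D →
      ∃ C : ℝ, 0 < C ∧ ∀ S : Set (EuclideanSpace ℝ (Fin N)), MeasurableSet S →
        volume (F ⁻¹' S ∩ D₀) ≤ ENNReal.ofReal C * volume S := by
  intro D₀ hD₀ hD₀D
  have hsurj : ∀ x ∈ D, Surjective (fderiv ℝ F x) := fun x hx => by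
    obtain ⟨P', -, hdet⟩ := hsub x hx
    exact Surjective.of_comp (g := P'.subtypeL)
      (LinearMap.surjective_of_det_comp_ne_zero ((sq_nonneg κ₀).trans_lt hdet).ne')
  obtain ⟨c, hc⟩ := hD₀.exists_measure_preimage_inter_le fun x hx =>
    exists_nhds_addHaar_preimage_inter_le volume volume hD hF (hD₀D hx) (hsurj x (hD₀D hx))
  refine ⟨c + 1, by positivity, fun S hS => (hc S hS).trans ?_⟩
  gcongr
  rw [← ENNReal.ofReal_coe_nnreal]
  exact ENNReal.ofReal_le_ofReal (by linarith)

/-- Preimages of small sets under uniform submersions are small: if `F : D → ℝ^N` is `C¹`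
with `‖DF‖ ≤ A` and at every point some `N`-dimensional subspace `P'` has
`|det(DF|_{P'})| > κ₀` (expressed via `det(A A*) > κ₀²`), then for every compact
`D₀ ⊆ D` there is `C` with `|F⁻¹(S) ∩ D₀| ≤ C |S|` for all measurable `S`. -/
theorem stmt16 (K N : ℕ) (hKN : N ≤ K)
    (D : Set (EuclideanSpace ℝ (Fin K))) (hD : IsOpen D)
    (F : EuclideanSpace ℝ (Fin K) → EuclideanSpace ℝ (Fin N))
    (hF : ContDiffOn ℝ 1 F D)
    (A κ₀ : ℝ) (hA : 0 < A) (hκ₀ : 0 < κ₀)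
    (hDF : ∀ B ∈ D, ‖fderiv ℝ F B‖ ≤ A)
    (hsub : ∀ B ∈ D, ∃ P' : Submodule ℝ (EuclideanSpace ℝ (Fin K)),
      Module.finrank ℝ P' = N ∧
      κ₀ ^ 2 < LinearMap.det
        ((((fderiv ℝ F B).comp P'.subtypeL).comp
          (ContinuousLinearMap.adjoint ((fderiv ℝ F B).comp P'.subtypeL))) :
            EuclideanSpace ℝ (Fin N) →ₗ[ℝ] EuclideanSpace ℝ (Fin N))) :
    ∀ D₀ : Set (EuclideanSpace ℝ (Fin K)), IsCompact D₀ → D₀ ⊆ D →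
      ∃ C : ℝ, 0 < C ∧ ∀ S : Set (EuclideanSpace ℝ (Fin N)), MeasurableSet S →
        volume (F ⁻¹' S ∩ D₀) ≤ ENNReal.ofReal C * volume S :=
  stmt16_general K N D hD F hF κ₀ hsub
end
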